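/- arXiv:0805.4675 — 4 statements merged into one kernel-verified Lean document; each statement's English description precedes it below -/
import Mathlib

section
/- On the spectral side: for a measure space (X, μ) and a measurable function s : X → ℝ with s(x) ≥ c₁ > 0 a.e., if α > 0 and δ = c₁α/(c₁+α), then for every f ∈ L²(μ): ∫ (1/s − 1/(s+α)) |f|² dμ ≥ δ ∫ |f|²/s² dμ. -/
open MeasureTheory

/-!
Pointwise, `1/t - 1/(t+α) = α / (t (t+α))`, and `t ↦ t/(t+α)` is increasing, so for `t ≥ c₁`
this is at least `(c₁ α/(c₁+α)) / t²`. Multiplying by `|f|²` and integrating gives the estimate;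
the right-hand integrand is integrable because `0 ≤ 1/s - 1/(s+α) ≤ 1/c₁`.
-/

section ResolventDifference

variable {c t α : ℝ}

lemma one_div_sub_one_div_add_nonneg (ht : 0 < t) (hα : 0 ≤ α) :
    0 ≤ 1 / t - 1 / (t + α) :=
  sub_nonneg.2 (one_div_le_one_div_of_le ht (le_add_of_nonneg_right hα))

lemma one_div_sub_one_div_add_le (hc : 0 < c) (hct : c ≤ t) (hα : 0 ≤ α) :
    1 / t - 1 / (t + α) ≤ 1 / c := by
  have hinv : 1 / t ≤ 1 / c := one_div_le_one_div_of_le hc hct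
  have hpos : 0 < 1 / (t + α) := by
    have : 0 < t + α := by linarith
    positivity
  linarith

lemma mul_div_add_div_sq_le_one_div_sub_one_div (hc : 0 < c) (hct : c ≤ t) (hα : 0 ≤ α) :
    c * α / (c + α) / t ^ 2 ≤ 1 / t - 1 / (t + α) := by
  have ht : 0 < t := hc.trans_le hct
  have htα : 0 < t + α := by linarith
  have hcα : 0 < c + α := by linarith
  rw [div_sub_div _ _ ht.ne' htα.ne', div_div, div_le_div_iff₀ (by positivity) (by positivity)]
  have hmono : c * (t + α) ≤ t * (c + α) := by nlinarith
  have hscale : 0 ≤ α * t ^ 2 := by positivity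
  nlinarith [mul_le_mul_of_nonneg_left hmono hscale]

end ResolventDifference

lemma MeasureTheory.Integrable.one_div_sub_one_div_add_mul {X : Type*} [MeasurableSpace X] {μ : Measure X}
    {s g : X → ℝ} {c α : ℝ} (hg : Integrable g μ) (hs : Measurable s) (hc : 0 < c)
    (hsc : ∀ᵐ x ∂μ, c ≤ s x) (hα : 0 ≤ α) :
    Integrable (fun x => (1 / s x - 1 / (s x + α)) * g x) μ := by
  refine hg.bdd_mul (c := 1 / c) ?_ ?_
  · exact ((hs.const_div 1).sub ((hs.add_const α).const_div 1)).aestronglyMeasurable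
  · filter_upwards [hsc] with x hx
    rw [Real.norm_eq_abs,
      abs_of_nonneg (one_div_sub_one_div_add_nonneg (hc.trans_le hx) hα)]
    exact one_div_sub_one_div_add_le hc hx hα

/-- Spectral (multiplication operator) formulation of the key estimate
`S⁻¹ − (S+α)⁻¹ ≥ δ S⁻²`: for a measure space `(X, μ)`, a measurable `s : X → ℝ`
with `s ≥ c₁ > 0` a.e., `α > 0` and `δ = c₁α/(c₁+α)`, every `f ∈ L²(μ)` satisfies
`∫ (1/s − 1/(s+α)) |f|² dμ ≥ δ ∫ |f|²/s² dμ`. -/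
theorem stmt2 {X : Type*} [MeasurableSpace X] (μ : Measure X)
    (s : X → ℝ) (hs : Measurable s) (c₁ : ℝ) (hc₁ : 0 < c₁)
    (hsc : ∀ᵐ x ∂μ, c₁ ≤ s x) (α : ℝ) (hα : 0 < α)
    (δ : ℝ) (hδ : δ = c₁ * α / (c₁ + α))
    (f : X → ℝ) (hf : MemLp f 2 μ) :
    δ * ∫ x, |f x| ^ 2 / (s x) ^ 2 ∂μ ≤
      ∫ x, (1 / s x - 1 / (s x + α)) * |f x| ^ 2 ∂μ := by
  subst hδ
  have hf2 : Integrable (fun x => |f x| ^ 2) μ := by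
    simpa only [sq_abs] using hf.integrable_sq
  rw [← integral_const_mul]
  refine integral_mono_of_nonneg (Filter.Eventually.of_forall fun x => ?_)
    (hf2.one_div_sub_one_div_add_mul hs hc₁ hsc hα.le) ?_
  · dsimp only [Pi.zero_apply]
    positivity
  filter_upwards [hsc] with x hx
  calc c₁ * α / (c₁ + α) * (|f x| ^ 2 / s x ^ 2)
      = c₁ * α / (c₁ + α) / s x ^ 2 * |f x| ^ 2 := by ring
    _ ≤ (1 / s x - 1 / (s x + α)) * |f x| ^ 2 := by
      gcongr
      exact mul_div_add_div_sq_le_one_div_sub_one_div hc₁ hx hα.le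
end

section
/- Under the hypotheses of the paper (q_{c₂} ≥ 0 on D₀, S ≥ c₁ I > 0), for every u ∈ D₀ and every 0 < δ ≤ c₁c₂/(c₁+c₂): q₀(u) ≥ δ‖u‖² + δ‖S⁻¹Tu‖². In particular the form norm on D₀ controls both ‖u‖ and ‖S⁻¹Tu‖. -/
open scoped RealInnerProductSpace

/-!
Write `w = S⁻¹x` and `z = (S + c)⁻¹w`. The resolvent identity gives
`⟪S⁻¹x, x⟫ - ⟪(S + c)⁻¹x, x⟫ = c‖w‖² - c²⟪z, w⟫`, and coercivity of `S + c` with constant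
`c₁ + c` gives `(c₁ + c)⟪z, w⟫ ≤ ‖w‖²`. Hence `S⁻¹ - (S + c)⁻¹ ≥ δ S⁻²` for
`δ ≤ c₁c/(c₁ + c)`, and adding `q_c(u) ≥ 0` together with `δ ≤ c` gives the claim.
-/

namespace ContinuousLinearMap

variable {H : Type*} [NormedAddCommGroup H] [InnerProductSpace ℝ H]

lemma mul_norm_sq_le_inner_add_smul_one_apply {S : H →L[ℝ] H} {c₁ : ℝ}
    (hSc : ∀ v : H, c₁ * ‖v‖ ^ 2 ≤ ⟪S v, v⟫) (c : ℝ) (v : H) :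
    (c₁ + c) * ‖v‖ ^ 2 ≤ ⟪(S + c • 1) v, v⟫ := by
  rw [add_apply, smul_apply, one_apply_eq_self, inner_add_left,
    real_inner_smul_left, real_inner_self_eq_norm_sq]
  linarith [hSc v]

lemma mul_inner_rightInverse_apply_le {A C : H →L[ℝ] H} {a : ℝ} (ha : 0 ≤ a)
    (hA : ∀ v : H, a * ‖v‖ ^ 2 ≤ ⟪A v, v⟫) (hAC : A ∘L C = 1) (w : H) :
    a * ⟪C w, w⟫ ≤ ‖w‖ ^ 2 := by
  set z := C w
  have hAz : A z = w := by simpa using congr($hAC w)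
  have hcoercive : a * ‖z‖ ^ 2 ≤ ⟪z, w⟫ := by
    rw [← hAz, real_inner_comm]
    exact hA z
  have hcauchy : ⟪z, w⟫ ≤ ‖z‖ * ‖w‖ := real_inner_le_norm z w
  have hnorm : a * ‖z‖ ≤ ‖w‖ := by
    rcases (norm_nonneg z).eq_or_lt with hz | hz
    · rw [← hz, mul_zero]
      exact norm_nonneg w
    · nlinarith
  nlinarith [norm_nonneg z]

variable {S B C : H →L[ℝ] H} {c : ℝ}

lemma inner_apply_self_apply_of_add_smul_one_comp (hS : (S : H →ₗ[ℝ] H).IsSymmetric)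
    (hC₁ : (S + c • 1) ∘L C = 1) (w : H) :
    ⟪C w, S w⟫ = ‖w‖ ^ 2 - c * ⟪C w, w⟫ := by
  have hSC : S (C w) = w - c • C w := by
    rw [eq_sub_iff_add_eq]
    simpa using congr($hC₁ w)
  rw [← (show ⟪S (C w), w⟫ = ⟪C w, S w⟫ from hS (C w) w), hSC, inner_sub_left,
    real_inner_smul_left, real_inner_self_eq_norm_sq]

lemma inner_sub_inner_eq_of_inverses (hS : (S : H →ₗ[ℝ] H).IsSymmetric)
    (hB₁ : S ∘L B = 1) (hC₁ : (S + c • 1) ∘L C = 1) (hC₂ : C ∘L (S + c • 1) = 1) (x : H) :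
    ⟪B x, x⟫ - ⟪C x, x⟫ = c * (‖B x‖ ^ 2 - c * ⟪C (B x), B x⟫) := by
  have hSB : S (B x) = x := by simpa using congr($hB₁ x)
  have hresolvent : B x - C x = c • C (B x) := by
    rw [sub_eq_iff_eq_add']
    simpa [hSB] using congr($hC₂ (B x)).symm
  rw [← inner_sub_left, hresolvent, real_inner_smul_left,
    ← inner_apply_self_apply_of_add_smul_one_comp hS hC₁, hSB]

lemma mul_norm_sq_le_inner_sub_inner_of_inverses {c₁ δ : ℝ} (hc₁ : 0 < c₁) (hc : 0 < c)
    (hS : (S : H →ₗ[ℝ] H).IsSymmetric) (hSc : ∀ v : H, c₁ * ‖v‖ ^ 2 ≤ ⟪S v, v⟫)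
    (hB₁ : S ∘L B = 1) (hC₁ : (S + c • 1) ∘L C = 1) (hC₂ : C ∘L (S + c • 1) = 1)
    (hδ : δ ≤ c₁ * c / (c₁ + c)) (x : H) :
    δ * ‖B x‖ ^ 2 ≤ ⟪B x, x⟫ - ⟪C x, x⟫ := by
  rw [inner_sub_inner_eq_of_inverses hS hB₁ hC₁ hC₂]
  have hsum : 0 < c₁ + c := by positivity
  have hCB : ⟪C (B x), B x⟫ ≤ ‖B x‖ ^ 2 / (c₁ + c) := by
    rw [le_div_iff₀' hsum]
    exact mul_inner_rightInverse_apply_le hsum.le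
      (mul_norm_sq_le_inner_add_smul_one_apply hSc c) hC₁ (B x)
  calc δ * ‖B x‖ ^ 2 ≤ c₁ * c / (c₁ + c) * ‖B x‖ ^ 2 := by gcongr
    _ = c * (‖B x‖ ^ 2 - c * (‖B x‖ ^ 2 / (c₁ + c))) := by field_simp; ring
    _ ≤ c * (‖B x‖ ^ 2 - c * ⟪C (B x), B x⟫) := by gcongr

end ContinuousLinearMap

theorem stmt6_general {H : Type*} [NormedAddCommGroup H] [InnerProductSpace ℝ H]
    [CompleteSpace H] (D₀ : Submodule ℝ H)
    (T P : D₀ →ₗ[ℝ] H)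
    (S : H →L[ℝ] H) (hS : IsSelfAdjoint S)
    (c₁ : ℝ) (hc₁ : 0 < c₁) (hSc : ∀ v : H, c₁ * ‖v‖ ^ 2 ≤ ⟪S v, v⟫)
    (B C : H →L[ℝ] H) (c₂ : ℝ) (hc₂ : 0 < c₂)
    (hB₁ : S ∘L B = 1)
    (hC₁ : (S + c₂ • 1) ∘L C = 1) (hC₂ : C ∘L (S + c₂ • 1) = 1)
    (hq : ∀ u : D₀, 0 ≤ ⟪C (T u), T u⟫ + ⟪P u, (u : H)⟫ - c₂ * ‖(u : H)‖ ^ 2) :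
    ∀ (δ : ℝ), 0 < δ → δ ≤ c₁ * c₂ / (c₁ + c₂) → ∀ u : D₀,
      δ * ‖(u : H)‖ ^ 2 + δ * ‖B (T u)‖ ^ 2 ≤ ⟪B (T u), T u⟫ + ⟪P u, (u : H)⟫ := by
  intro δ _ hδ u
  have hδc₂ : δ ≤ c₂ := hδ.trans <| by
    rw [div_le_iff₀ (by positivity)]
    nlinarith
  have hform := ContinuousLinearMap.mul_norm_sq_le_inner_sub_inner_of_inverses hc₁ hc₂
    hS.isSymmetric hSc hB₁ hC₁ hC₂ hδ (T u)
  have hnorm : δ * ‖(u : H)‖ ^ 2 ≤ c₂ * ‖(u : H)‖ ^ 2 := by gcongr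
  linarith [hq u]

/-- Proposition 2 of the paper (continuous embedding `H₊₁ ⊆ {u : S⁻¹Tu ∈ H₀}`):
under the Hardy-like assumption `q_{c₂}(u) ≥ 0` on `D₀` and `S ≥ c₁ I > 0`, for every
`u ∈ D₀` and every `0 < δ ≤ c₁c₂/(c₁+c₂)` one has
`q₀(u) ≥ δ‖u‖² + δ‖S⁻¹Tu‖²`. -/
theorem stmt6 {H : Type*} [NormedAddCommGroup H] [InnerProductSpace ℝ H]
    [CompleteSpace H] (D₀ : Submodule ℝ H)
    (T P : D₀ →ₗ[ℝ] H)
    (hP : ∀ u v : D₀, ⟪P u, (v : H)⟫ = ⟪(u : H), P v⟫)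
    (S : H →L[ℝ] H) (hS : IsSelfAdjoint S)
    (c₁ : ℝ) (hc₁ : 0 < c₁) (hSc : ∀ v : H, c₁ * ‖v‖ ^ 2 ≤ ⟪S v, v⟫)
    (B C : H →L[ℝ] H) (c₂ : ℝ) (hc₂ : 0 < c₂)
    (hB₁ : S ∘L B = 1) (hB₂ : B ∘L S = 1)
    (hC₁ : (S + c₂ • 1) ∘L C = 1) (hC₂ : C ∘L (S + c₂ • 1) = 1)
    (hq : ∀ u : D₀, 0 ≤ ⟪C (T u), T u⟫ + ⟪P u, (u : H)⟫ - c₂ * ‖(u : H)‖ ^ 2) :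
    ∀ (δ : ℝ), 0 < δ → δ ≤ c₁ * c₂ / (c₁ + c₂) → ∀ u : D₀,
      δ * ‖(u : H)‖ ^ 2 + δ * ‖B (T u)‖ ^ 2 ≤ ⟪B (T u), T u⟫ + ⟪P u, (u : H)⟫ :=
  stmt6_general D₀ T P S hS c₁ hc₁ hSc B C c₂ hc₂ hB₁ hC₁ hC₂ hq
end

section
/- Let α ↦ q_α(u) = ⟨(S+α)⁻¹Tu, Tu⟩ + ⟨Pu,u⟩ − α‖u‖² for α ≥ 0, where S is self-adjoint with S ≥ c₁I > 0. Then for 0 ≤ α ≤ β: q_β(u) ≤ q_α(u), i.e. α ↦ q_α(u) is nonincreasing. -/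
open scoped RealInnerProductSpace

/-- Monotonicity of the family of quadratic forms
`q_α(u) = ⟪(S+α)⁻¹Tu, Tu⟫ + ⟪Pu,u⟫ − α‖u‖²`: for `S` self-adjoint with `S ≥ c₁ I > 0`,
`0 ≤ α ≤ β`, and `A = (S+α)⁻¹`, `B = (S+β)⁻¹` the bounded inverses, one has
`q_β(u) ≤ q_α(u)`.  Here `Tu` is a fixed vector `w` and `⟪Pu,u⟫` a fixed real `p`. -/
theorem stmt15 {H : Type*} [NormedAddCommGroup H] [InnerProductSpace ℝ H]
    [CompleteSpace H] (S : H →L[ℝ] H) (hS : IsSelfAdjoint S)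
    (c₁ : ℝ) (hc₁ : 0 < c₁) (hSc : ∀ v : H, c₁ * ‖v‖ ^ 2 ≤ ⟪S v, v⟫)
    (α β : ℝ) (hα : 0 ≤ α) (hαβ : α ≤ β)
    (A B : H →L[ℝ] H)
    (hA₁ : (S + α • 1) ∘L A = 1) (hA₂ : A ∘L (S + α • 1) = 1)
    (hB₁ : (S + β • 1) ∘L B = 1) (hB₂ : B ∘L (S + β • 1) = 1)
    (w u : H) (p : ℝ) :
    ⟪B w, w⟫ + p - β * ‖u‖ ^ 2 ≤ ⟪A w, w⟫ + p - α * ‖u‖ ^ 2 := by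
  have hSsym : ∀ x y : H, ⟪S x, y⟫ = ⟪x, S y⟫ := fun x y =>
    (ContinuousLinearMap.isSelfAdjoint_iff_isSymmetric.mp hS) x y
  -- pointwise inverse identities
  have hA1 : ∀ x, (S + α • 1) (A x) = x := fun x => congrFun (congrArg DFunLike.coe hA₁) x
  have hA2 : ∀ x, A ((S + α • 1) x) = x := fun x => congrFun (congrArg DFunLike.coe hA₂) x
  have hB1 : ∀ x, (S + β • 1) (B x) = x := fun x => congrFun (congrArg DFunLike.coe hB₁) x
  have hB2 : ∀ x, B ((S + β • 1) x) = x := fun x => congrFun (congrArg DFunLike.coe hB₂) x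
  have happ : ∀ (γ : ℝ) (x : H), (S + γ • (1 : H →L[ℝ] H)) x = S x + γ • x := by
    intro γ x; simp
  -- symmetry of S + γ•1
  have hsymα : ∀ x y : H, ⟪(S + α • 1) x, y⟫ = ⟪x, (S + α • 1) y⟫ := by
    intro x y
    rw [happ, happ, inner_add_left, inner_add_right, hSsym, real_inner_smul_left,
      real_inner_smul_right]
  have hsymβ : ∀ x y : H, ⟪(S + β • 1) x, y⟫ = ⟪x, (S + β • 1) y⟫ := by
    intro x y
    rw [happ, happ, inner_add_left, inner_add_right, hSsym, real_inner_smul_left,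
      real_inner_smul_right]
  -- B is symmetric
  have hBsym : ∀ x y : H, ⟪B x, y⟫ = ⟪x, B y⟫ := by
    intro x y
    calc ⟪B x, y⟫ = ⟪B x, (S + β • 1) (B y)⟫ := by rw [hB1]
      _ = ⟪(S + β • 1) (B x), B y⟫ := (hsymβ _ _).symm
      _ = ⟪x, B y⟫ := by rw [hB1]
  have hAsym : ∀ x y : H, ⟪A x, y⟫ = ⟪x, A y⟫ := by
    intro x y
    calc ⟪A x, y⟫ = ⟪A x, (S + α • 1) (A y)⟫ := by rw [hA1]
      _ = ⟪(S + α • 1) (A x), A y⟫ := (hsymα _ _).symm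
      _ = ⟪x, A y⟫ := by rw [hA1]
  -- A is positive
  have hApos : ∀ v : H, 0 ≤ ⟪A v, v⟫ := by
    intro v
    have : ⟪A v, v⟫ = ⟪S (A v), A v⟫ + α * ‖A v‖ ^ 2 := by
      calc ⟪A v, v⟫ = ⟪A v, (S + α • 1) (A v)⟫ := by rw [hA1]
        _ = ⟪(S + α • 1) (A v), A v⟫ := (hsymα _ _).symm
        _ = ⟪S (A v), A v⟫ + α * ‖A v‖ ^ 2 := by
            rw [happ, inner_add_left, real_inner_smul_left, real_inner_self_eq_norm_sq]
    rw [this]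
    have h1 := hSc (A v)
    have h2 : 0 ≤ c₁ * ‖A v‖ ^ 2 := by positivity
    nlinarith [mul_nonneg hα (sq_nonneg ‖A v‖)]
  set v := B w with hv
  -- A w = v + (β - α) • A v
  have key : A w = v + (β - α) • A v := by
    have hw : w = (S + β • 1) v := (hB1 w).symm
    have : (S + β • 1) v = (S + α • 1) v + (β - α) • v := by
      rw [happ, happ, sub_smul]; abel
    calc A w = A ((S + α • 1) v + (β - α) • v) := by rw [hw, this]
      _ = A ((S + α • 1) v) + (β - α) • A v := by rw [map_add, map_smul]
      _ = v + (β - α) • A v := by rw [hA2]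
  -- hence ⟪A w, w⟫ - ⟪B w, w⟫ = (β-α)(‖v‖² + (β-α)⟪A v, v⟫)
  have hAwBw : ⟪A w, B w⟫ = ‖v‖ ^ 2 + (β - α) * ⟪A v, v⟫ := by
    rw [key, inner_add_left, real_inner_smul_left, real_inner_self_eq_norm_sq]
  have expand : ⟪A w, w⟫ = ⟪B w, w⟫ + (β - α) * (‖v‖ ^ 2 + (β - α) * ⟪A v, v⟫) := by
    calc ⟪A w, w⟫ = ⟪v + (β - α) • A v, w⟫ := by rw [key]
      _ = ⟪B w, w⟫ + (β - α) * ⟪A v, w⟫ := by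
          rw [inner_add_left, real_inner_smul_left]
      _ = ⟪B w, w⟫ + (β - α) * ⟪A w, B w⟫ := by
          rw [hAsym, real_inner_comm v (A w)]
      _ = ⟪B w, w⟫ + (β - α) * (‖v‖ ^ 2 + (β - α) * ⟪A v, v⟫) := by rw [hAwBw]
  have hβα : 0 ≤ β - α := by linarith
  have hpos : 0 ≤ (β - α) * (‖v‖ ^ 2 + (β - α) * ⟪A v, v⟫) := by
    have := hApos v
    positivity
  nlinarith [sq_nonneg ‖u‖, mul_nonneg (sub_nonneg.mpr hαβ) (sq_nonneg ‖u‖)]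
end

section
/- Scalar version of the key Hardy-type consequence: if s ≥ c₁ > 0, p ∈ ℝ, t ≥ 0 satisfy t/(s+c₂) + p − c₂ ≥ 0 for some c₂ > 0, then t/s + p ≥ δ(1 + t/s²) for every 0 < δ ≤ c₁c₂/(c₁+c₂). -/
/-! The hypothesis gives `p ≥ c₂ - t/(s+c₂)`, and `t/s - t/(s+c₂) = (s c₂/(s+c₂)) · t/s²`.
Since `x ↦ x c₂/(x+c₂)` is increasing and bounded by `c₂`, we get
`δ ≤ c₁c₂/(c₁+c₂) ≤ s c₂/(s+c₂) ≤ c₂`, which bounds both terms of `δ (1 + t/s²)`. -/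

lemma mul_div_add_le_mul_div_add {a b c : ℝ} (ha : 0 < a) (hab : a ≤ b) (hc : 0 ≤ c) :
    a * c / (a + c) ≤ b * c / (b + c) := by
  rw [div_le_div_iff₀ (by linarith) (by linarith)]
  nlinarith [mul_le_mul_of_nonneg_right hab (mul_nonneg hc hc)]

lemma mul_div_add_le_right {b c : ℝ} (hb : 0 ≤ b) (hc : 0 < c) : b * c / (b + c) ≤ c := by
  rw [div_le_iff₀ (by linarith)]
  nlinarith

lemma div_sub_div_add_eq_mul_div_sq {s c : ℝ} (t : ℝ) (hs : s ≠ 0) (hsc : s + c ≠ 0) :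
    t / s - t / (s + c) = s * c / (s + c) * (t / s ^ 2) := by
  field_simp
  ring

theorem stmt17_general (c₁ c₂ s p t δ : ℝ) (hc₁ : 0 < c₁) (hs : c₁ ≤ s) (ht : 0 ≤ t)
    (hc₂ : 0 < c₂) (hq : 0 ≤ t / (s + c₂) + p - c₂)
    (hδle : δ ≤ c₁ * c₂ / (c₁ + c₂)) :
    δ * (1 + t / s ^ 2) ≤ t / s + p := by
  have hs₀ : 0 < s := hc₁.trans_le hs
  have hδs : δ ≤ s * c₂ / (s + c₂) := hδle.trans (mul_div_add_le_mul_div_add hc₁ hs hc₂.le)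
  have hδc : δ ≤ c₂ := hδs.trans (mul_div_add_le_right hs₀.le hc₂)
  calc δ * (1 + t / s ^ 2) = δ + δ * (t / s ^ 2) := by ring
    _ ≤ c₂ + s * c₂ / (s + c₂) * (t / s ^ 2) :=
        add_le_add hδc (mul_le_mul_of_nonneg_right hδs (by positivity))
    _ = c₂ + (t / s - t / (s + c₂)) := by
        rw [div_sub_div_add_eq_mul_div_sq t hs₀.ne' (by linarith)]
    _ ≤ t / s + p := by linarith

/-- Scalar version of the Hardy-type consequence: if `s ≥ c₁ > 0`, `t ≥ 0`,
`t/(s+c₂) + p − c₂ ≥ 0` for some `c₂ > 0`, then `t/s + p ≥ δ(1 + t/s²)` for every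
`0 < δ ≤ c₁c₂/(c₁+c₂)`. -/
theorem stmt17 (c₁ c₂ s p t δ : ℝ) (hc₁ : 0 < c₁) (hs : c₁ ≤ s) (ht : 0 ≤ t)
    (hc₂ : 0 < c₂) (hq : 0 ≤ t / (s + c₂) + p - c₂)
    (hδ : 0 < δ) (hδle : δ ≤ c₁ * c₂ / (c₁ + c₂)) :
    δ * (1 + t / s ^ 2) ≤ t / s + p :=
  stmt17_general c₁ c₂ s p t δ hc₁ hs ht hc₂ hq hδle
end
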